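/- Let A have restricted isometry constants δ_q. Let ŵ ∈ W^k satisfy supp(x_S) ⊆ supp(ŵ), let x^p ∈ ℝⁿ be k-sparse, u^p = x^p + Aᵀ(y − A x^p), and let w^(1), …, w^(ω) ∈ P^k be successive compression minimizers at x^p. Then for every i = 1, …, ω−1: ‖A[(u^p − x_S) ⊗ (w^(1) ⊗ ⋯ ⊗ w^(i)) ⊗ (e − ŵ)]‖₂ ≤ 2δ_{3k}·√(1+δ_k)·‖x_S − x^p‖₂ + 2√(1+δ_k)·‖Aᵀν'‖₂. -/

import Mathlib

open Finset

noncomputable def nsq {ι : Type*} [Fintype ι] (x : ι → ℝ) : ℝ := ∑ i, (x i) ^ 2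

noncomputable def n2 {ι : Type*} [Fintype ι] (x : ι → ℝ) : ℝ := Real.sqrt (nsq x)

noncomputable def supp {n : ℕ} (x : Fin n → ℝ) : Finset (Fin n) :=
  Finset.univ.filter (fun i => x i ≠ 0)

def Sparse {n : ℕ} (k : ℕ) (x : Fin n → ℝ) : Prop := (supp x).card ≤ k

def restr {n : ℕ} (x : Fin n → ℝ) (T : Finset (Fin n)) : Fin n → ℝ :=
  fun i => if i ∈ T then x i else 0

def SatRIP {m n : ℕ} (A : Matrix (Fin m) (Fin n) ℝ) (q : ℕ) (δ : ℝ) : Prop :=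
  ∀ z : Fin n → ℝ, Sparse q z →
    (1 - δ) * nsq z ≤ nsq (A.mulVec z) ∧ nsq (A.mulVec z) ≤ (1 + δ) * nsq z

/-- `δ` is the `q`-th order restricted isometry constant of `A`:
the smallest `δ' ≥ 0` such that `(1-δ')‖z‖² ≤ ‖Az‖² ≤ (1+δ')‖z‖²` for all `q`-sparse `z`. -/
def IsRIC {m n : ℕ} (A : Matrix (Fin m) (Fin n) ℝ) (q : ℕ) (δ : ℝ) : Prop :=
  IsLeast {δ' : ℝ | 0 ≤ δ' ∧ SatRIP A q δ'} δ

/-- membership in `W^k`: binary vectors with exactly `k` entries equal to 1. -/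
def InW {n : ℕ} (k : ℕ) (w : Fin n → ℝ) : Prop :=
  (∀ i, w i = 0 ∨ w i = 1) ∧ (Finset.univ.filter (fun i => w i = 1)).card = k

/-- membership in the polytope `P^k`. -/
def InP {n : ℕ} (k : ℕ) (w : Fin n → ℝ) : Prop :=
  (∑ i, w i) = (k : ℝ) ∧ ∀ i, 0 ≤ w i ∧ w i ≤ 1

/-- `S` is an index set of the `k` largest absolute entries of `x`. -/
def IsTopK {n : ℕ} (x : Fin n → ℝ) (k : ℕ) (S : Finset (Fin n)) : Prop :=
  S.card = k ∧ ∀ i ∈ S, ∀ j ∉ S, |x j| ≤ |x i|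

/-- `d` is a hard thresholding `H_k(z)` of `z`. -/
def IsHT {n : ℕ} (k : ℕ) (z d : Fin n → ℝ) : Prop :=
  Sparse k d ∧ ∀ d' : Fin n → ℝ, Sparse k d' → n2 (z - d) ≤ n2 (z - d')

/-- `w 0, …, w (ω-1)` are successive compression minimizers at `x^p` (with `u^p = up`). -/
def SCM {m n : ℕ} (A : Matrix (Fin m) (Fin n) ℝ) (y : Fin m → ℝ) (k ω : ℕ)
    (up : Fin n → ℝ) (w : ℕ → Fin n → ℝ) : Prop :=
  ∀ j < ω, InP k (w j) ∧ ∀ v : Fin n → ℝ, InP k v →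
    n2 (y - A.mulVec (up * (∏ l ∈ Finset.range j, w l) * w j)) ≤
    n2 (y - A.mulVec (up * (∏ l ∈ Finset.range j, w l) * v))

/-- the `ℓ∞` norm of `x` restricted to `T` (zero if `T` is empty). -/
noncomputable def linfT {n : ℕ} (x : Fin n → ℝ) (T : Finset (Fin n)) : ℝ :=
  if h : T.Nonempty then T.sup' h (fun j => |x j|) else 0

/-
Write `h = x_S - x^p`. Since `y - A x^p = A h + ν'`, the error `u^p - x_S` equals
`(AᵀA - I) h + Aᵀν'`, and since `h` is `2k`-sparse, restricted orthogonality bounds its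
restriction to any `k` indices by `M = δ_{3k} ‖h‖ + ‖Aᵀν'‖`. The weights
`w^(1) ⊗ ⋯ ⊗ w^(i) ⊗ (e - ŵ)` lie in `[0, 1]` and sum to at most `k` (already `w^(1)` does), so
the weighted error `g` keeps all `k`-restrictions below `M` and has `‖g‖₁ ≤ √k M`. The
Needell–Tropp estimate `‖A g‖ ≤ √(1 + δ_k) (M + ‖g‖₁ / √k)`, obtained by splitting `g` into blocks
of `k` largest entries, then gives `2 √(1 + δ_k) M`.
-/

open Matrix

def InCappedSimplex {ι : Type*} [Fintype ι] (k : ℕ) (V : ι → ℝ) : Prop :=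
  (∀ i, V i ∈ Set.Icc 0 1) ∧ ∑ i, V i ≤ k

section CappedSimplex

variable {n k : ℕ}

lemma InP.inCappedSimplex {w : Fin n → ℝ} (hw : InP k w) : InCappedSimplex k w :=
  ⟨hw.2, hw.1.le⟩

lemma InW.one_sub_mem_Icc {w : Fin n → ℝ} (hw : InW k w) (i : Fin n) :
    (1 - w) i ∈ Set.Icc 0 1 := by
  rcases hw.1 i with h | h <;> simp [h]

lemma InCappedSimplex.mul {V c : Fin n → ℝ} (hV : InCappedSimplex k V)
    (hc : ∀ i, c i ∈ Set.Icc 0 1) : InCappedSimplex k (V * c) :=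
  ⟨fun i => ⟨mul_nonneg (hV.1 i).1 (hc i).1, mul_le_one₀ (hV.1 i).2 (hc i).1 (hc i).2⟩,
    (sum_le_sum fun i _ => mul_le_of_le_one_right (hV.1 i).1 (hc i).2).trans hV.2⟩

lemma InCappedSimplex.prod_range {w : ℕ → Fin n → ℝ} {i : ℕ} (hi : 0 < i)
    (hw : ∀ l < i, InP k (w l)) : InCappedSimplex k (∏ l ∈ range i, w l) := by
  induction i, hi using Nat.le_induction with
  | base => simpa using (hw 0 one_pos).inCappedSimplex
  | succ i hi ih =>
    rw [prod_range_succ]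
    exact (ih fun l hl => hw l (by omega)).mul (hw i (by omega)).2

end CappedSimplex

section Norm

variable {ι : Type*} [Fintype ι]

lemma nsq_nonneg (f : ι → ℝ) : 0 ≤ nsq f := sum_nonneg fun i _ => sq_nonneg (f i)

lemma nsq_eq_dotProduct (f : ι → ℝ) : nsq f = f ⬝ᵥ f := by
  simp only [nsq, dotProduct, sq]

lemma sq_n2 (f : ι → ℝ) : n2 f ^ 2 = nsq f := Real.sq_sqrt (nsq_nonneg f)

lemma n2_nonneg (f : ι → ℝ) : 0 ≤ n2 f := Real.sqrt_nonneg _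

lemma n2_eq_norm (f : ι → ℝ) : n2 f = ‖(WithLp.toLp 2 f : EuclideanSpace ℝ ι)‖ := by
  simp [n2, nsq, EuclideanSpace.norm_eq]

lemma n2_eq_zero {f : ι → ℝ} : n2 f = 0 ↔ f = 0 := by
  rw [n2_eq_norm, norm_eq_zero, WithLp.toLp_eq_zero]

lemma n2_add_le (f g : ι → ℝ) : n2 (f + g) ≤ n2 f + n2 g := by
  simpa only [n2_eq_norm, WithLp.toLp_add] using norm_add_le _ _

lemma n2_le_n2_of_abs_le {f g : ι → ℝ} (h : ∀ i, |f i| ≤ |g i|) : n2 f ≤ n2 g :=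
  Real.sqrt_le_sqrt (sum_le_sum fun i _ => sq_le_sq.mpr (h i))

lemma nsq_smul_add_smul (a b : ℝ) (u v : ι → ℝ) :
    nsq (a • u + b • v) = a ^ 2 * nsq u + 2 * a * b * (u ⬝ᵥ v) + b ^ 2 * nsq v := by
  simp only [nsq_eq_dotProduct, add_dotProduct, dotProduct_add, smul_dotProduct,
    dotProduct_smul, dotProduct_comm v u, smul_eq_mul]
  ring

end Norm

section Support

variable {n : ℕ}

lemma supp_subset_iff {f : Fin n → ℝ} {U : Finset (Fin n)} :
    supp f ⊆ U ↔ ∀ i ∉ U, f i = 0 := by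
  simp only [supp, subset_iff, mem_filter, mem_univ, true_and]
  exact ⟨fun h i hi => by_contra fun h' => hi (h h'), fun h i hi => by_contra fun h' => hi (h i h')⟩

lemma supp_add_subset (f g : Fin n → ℝ) : supp (f + g) ⊆ supp f ∪ supp g :=
  supp_subset_iff.mpr fun _ hi => by simp_all [supp]

lemma supp_sub_subset (f g : Fin n → ℝ) : supp (f - g) ⊆ supp f ∪ supp g :=
  supp_subset_iff.mpr fun _ hi => by simp_all [supp]

lemma supp_smul_subset (a : ℝ) (f : Fin n → ℝ) : supp (a • f) ⊆ supp f :=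
  supp_subset_iff.mpr fun _ hi => by simp_all [supp]

lemma supp_restr_subset (f : Fin n → ℝ) (T : Finset (Fin n)) : supp (restr f T) ⊆ T :=
  supp_subset_iff.mpr fun _ hi => if_neg hi

lemma supp_restr_compl (f : Fin n → ℝ) (T : Finset (Fin n)) :
    supp (restr f Tᶜ) = supp f \ T := by
  ext i
  by_cases hi : i ∈ T <;> simp [supp, restr, hi]

lemma restr_supp (f : Fin n → ℝ) : restr f (supp f) = f := by
  funext i
  by_cases h : f i = 0 <;> simp [restr, supp, h]

lemma restr_add (f g : Fin n → ℝ) (T : Finset (Fin n)) :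
    restr (f + g) T = restr f T + restr g T := by
  funext i
  by_cases hi : i ∈ T <;> simp [restr, hi]

lemma restr_mul (f g : Fin n → ℝ) (T : Finset (Fin n)) :
    restr (f * g) T = restr f T * g := by
  funext i
  by_cases hi : i ∈ T <;> simp [restr, hi]

lemma restr_add_restr_compl (f : Fin n → ℝ) (T : Finset (Fin n)) :
    restr f T + restr f Tᶜ = f := by
  funext i
  by_cases hi : i ∈ T <;> simp [restr, hi]

lemma restr_dotProduct_self (f : Fin n → ℝ) (T : Finset (Fin n)) :
    restr f T ⬝ᵥ f = nsq (restr f T) := by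
  rw [nsq_eq_dotProduct]
  refine sum_congr rfl fun i _ => ?_
  by_cases hi : i ∈ T <;> simp [restr, hi]

lemma sum_abs_restr (f : Fin n → ℝ) (T : Finset (Fin n)) :
    ∑ i, |restr f T i| = ∑ i ∈ T, |f i| := by
  simp only [restr, apply_ite, abs_zero, sum_ite_mem, univ_inter]

lemma nsq_restr (f : Fin n → ℝ) (T : Finset (Fin n)) :
    nsq (restr f T) = ∑ i ∈ T, f i ^ 2 := by
  simp [nsq, restr, ite_pow, sum_ite_mem]

lemma n2_restr_le (f : Fin n → ℝ) (T : Finset (Fin n)) : n2 (restr f T) ≤ n2 f :=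
  n2_le_n2_of_abs_le fun i => by by_cases hi : i ∈ T <;> simp [restr, hi]

lemma sum_abs_le_sqrt_card_mul_n2_restr (f : Fin n → ℝ) (T : Finset (Fin n)) :
    ∑ i ∈ T, |f i| ≤ √(#T : ℝ) * n2 (restr f T) := by
  have h : (∑ i ∈ T, |f i|) ^ 2 ≤ #T * nsq (restr f T) := by
    simpa [nsq_restr] using sq_sum_le_card_mul_sum_sq (s := T) (f := fun i => |f i|)
  rw [n2, ← Real.sqrt_mul (Nat.cast_nonneg _)]
  exact (le_abs_self _).trans (Real.abs_le_sqrt h)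

lemma n2_restr_le_sqrt_card_mul {f : Fin n → ℝ} {T : Finset (Fin n)} {μ : ℝ} (hμ : 0 ≤ μ)
    (hf : ∀ i ∈ T, |f i| ≤ μ) : n2 (restr f T) ≤ √(#T : ℝ) * μ := by
  have h : nsq (restr f T) ≤ #T * μ ^ 2 := by
    rw [nsq_restr, ← nsmul_eq_mul, ← sum_const]
    exact sum_le_sum fun i hi => sq_le_sq' (abs_le.mp (hf i hi)).1 (abs_le.mp (hf i hi)).2
  rw [← Real.sqrt_sq hμ, ← Real.sqrt_mul (Nat.cast_nonneg _)]
  exact Real.sqrt_le_sqrt h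

end Support

lemma Finset.exists_subset_card_eq_forall_le {α β : Type*} [DecidableEq α] [LinearOrder β]
    (c : α → β) (s : Finset α) {k : ℕ} (hk : k ≤ #s) :
    ∃ T ⊆ s, #T = k ∧ ∀ i ∈ T, ∀ j ∈ s \ T, c j ≤ c i := by
  induction k with
  | zero => exact ⟨∅, empty_subset _, card_empty, by simp⟩
  | succ k ih =>
    obtain ⟨T, hTs, hTk, hT⟩ := ih (Nat.le_of_succ_le hk)
    obtain ⟨j₀, hj₀, hmax⟩ := (s \ T).exists_max_image c
      (by rw [← card_pos, card_sdiff_of_subset hTs]; omega)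
    have hj₀T : j₀ ∉ T := (mem_sdiff.mp hj₀).2
    refine ⟨insert j₀ T, insert_subset (mem_sdiff.mp hj₀).1 hTs,
      by rw [card_insert_of_notMem hj₀T, hTk], fun i hi j hj => ?_⟩
    have hj' : j ∈ s \ T := sdiff_subset_sdiff subset_rfl (subset_insert j₀ T) hj
    rcases mem_insert.mp hi with rfl | hi
    · exact hmax j hj'
    · exact hT i hi j hj'

lemma exists_card_le_sum_mul_le_sum {α : Type*} [Fintype α] [DecidableEq α] {k : ℕ} (hk : 0 < k)
    {c V : α → ℝ} (hc : ∀ i, 0 ≤ c i) (hV : InCappedSimplex k V) :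
    ∃ T : Finset α, #T ≤ k ∧ ∑ i, c i * V i ≤ ∑ i ∈ T, c i := by
  by_cases hkα : k ≤ Fintype.card α
  swap
  · exact ⟨univ, by simp; omega, sum_le_sum fun i _ => mul_le_of_le_one_right (hc i) (hV.1 i).2⟩
  obtain ⟨T, -, hTk, hT⟩ := exists_subset_card_eq_forall_le c univ (by simpa using hkα)
  refine ⟨T, hTk.le, ?_⟩
  obtain ⟨i₀, hi₀, hmin⟩ := T.exists_min_image c (card_pos.mp (hTk ▸ hk))
  -- `c i₀` separates the values of `c` on `T` from those off `T`
  have hpt : ∀ i, (c i - c i₀) * V i ≤ if i ∈ T then c i - c i₀ else 0 := by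
    intro i
    split_ifs with hi
    · exact mul_le_of_le_one_right (sub_nonneg.mpr (hmin i hi)) (hV.1 i).2
    · exact mul_nonpos_of_nonpos_of_nonneg (sub_nonpos.mpr (hT i₀ hi₀ i (by simpa using hi)))
        (hV.1 i).1
  calc ∑ i, c i * V i = ∑ i, (c i - c i₀) * V i + c i₀ * ∑ i, V i := by
        rw [mul_sum, ← sum_add_distrib]
        exact sum_congr rfl fun i _ => by ring
    _ ≤ ∑ i ∈ T, (c i - c i₀) + c i₀ * k := by
        gcongr ?_ + ?_
        · exact (sum_le_sum fun i _ => hpt i).trans_eq (by rw [sum_ite_mem, univ_inter])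
        · exact mul_le_mul_of_nonneg_left hV.2 (hc i₀)
    _ = ∑ i ∈ T, c i := by
        rw [sum_sub_distrib, sum_const, hTk, nsmul_eq_mul]
        ring

namespace SatRIP

variable {m n k : ℕ} {A : Matrix (Fin m) (Fin n) ℝ} {δ : ℝ}

lemma n2_mulVec_le (hR : SatRIP A k δ) {z : Fin n → ℝ} (hz : Sparse k z) :
    n2 (A *ᵥ z) ≤ √(1 + δ) * n2 z := by
  rw [n2, n2, ← Real.sqrt_mul' _ (nsq_nonneg z)]
  exact Real.sqrt_le_sqrt (hR z hz).2

lemma abs_dotProduct_sub_le (hR : SatRIP A k δ) {u v : Fin n → ℝ}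
    (huv : #(supp u ∪ supp v) ≤ k) :
    |u ⬝ᵥ v - A *ᵥ u ⬝ᵥ A *ᵥ v| ≤ δ * n2 u * n2 v := by
  -- polarization of the two RIP inequalities at `a u + b v` and `a u - b v`
  have key : ∀ a b : ℝ, a * b * (u ⬝ᵥ v - A *ᵥ u ⬝ᵥ A *ᵥ v) ≤
      δ / 2 * (a ^ 2 * nsq u + b ^ 2 * nsq v) := by
    intro a b
    have hsparse : ∀ c : ℝ, Sparse k (a • u + c • v) := fun c =>
      (card_le_card ((supp_add_subset _ _).trans
        (union_subset_union (supp_smul_subset _ _) (supp_smul_subset _ _)))).trans huv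
    have hplus := (hR _ (hsparse b)).1
    have hminus := (hR _ (hsparse (-b))).2
    simp only [mulVec_add, mulVec_smul, nsq_smul_add_smul] at hplus hminus
    linear_combination (hplus + hminus) / 4
  rcases (mul_nonneg (n2_nonneg u) (n2_nonneg v)).eq_or_lt with h0 | h0
  · rcases mul_eq_zero.mp h0.symm with h | h <;> simp [n2_eq_zero.mp h, n2, nsq]
  have hsign : ∀ s : ℝ, s ^ 2 = 1 →
      s * (u ⬝ᵥ v - A *ᵥ u ⬝ᵥ A *ᵥ v) ≤ δ * n2 u * n2 v := by
    intro s hs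
    have h := key (n2 v) (s * n2 u)
    rw [← sq_n2 u, ← sq_n2 v] at h
    refine le_of_mul_le_mul_left ?_ h0
    linear_combination h + δ / 2 * (n2 u * n2 v) ^ 2 * hs
  rw [abs_le']
  exact ⟨by simpa using hsign 1 (one_pow 2), by simpa using hsign (-1) (by norm_num)⟩

lemma n2_restr_gram_sub_le (hR : SatRIP A k δ) (hδ : 0 ≤ δ) (h : Fin n → ℝ)
    {T : Finset (Fin n)} (hT : #T + #(supp h) ≤ k) :
    n2 (restr (Aᵀ *ᵥ (A *ᵥ h) - h) T) ≤ δ * n2 h := by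
  set φ := restr (Aᵀ *ᵥ (A *ᵥ h) - h) T
  have hφ : nsq φ = A *ᵥ φ ⬝ᵥ A *ᵥ h - φ ⬝ᵥ h := by
    rw [← restr_dotProduct_self, dotProduct_sub, dotProduct_mulVec, vecMul_transpose]
  have hcard : #(supp φ ∪ supp h) ≤ k :=
    (card_union_le _ _).trans (by grw [card_le_card (supp_restr_subset _ _)]; exact hT)
  have hle : n2 φ ^ 2 ≤ δ * n2 φ * n2 h := by
    rw [sq_n2, hφ, ← neg_sub]
    exact (neg_le_abs _).trans (hR.abs_dotProduct_sub_le hcard)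
  rcases (n2_nonneg φ).eq_or_lt with h0 | h0
  · rw [← h0]
    exact mul_nonneg hδ (n2_nonneg h)
  · exact le_of_mul_le_mul_left (by linear_combination hle) h0

lemma n2_mulVec_le_of_forall_n2_restr_le (hR : SatRIP A k δ) (hk : 0 < k) {g : Fin n → ℝ}
    {M : ℝ} (hM : ∀ T : Finset (Fin n), #T ≤ k → n2 (restr g T) ≤ M) :
    n2 (A *ᵥ g) ≤ √(1 + δ) * (M + (∑ i, |g i|) / √k) := by
  induction hs : #(supp g) using Nat.strong_induction_on generalizing g M with
  | _ s ih =>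
  by_cases hsk : s ≤ k
  · have hg : Sparse k g := by rw [Sparse, hs]; exact hsk
    calc n2 (A *ᵥ g) ≤ √(1 + δ) * n2 g := hR.n2_mulVec_le hg
      _ ≤ √(1 + δ) * M := by
          gcongr
          simpa only [restr_supp] using hM _ hg
      _ ≤ _ := by
          gcongr
          exact le_add_of_nonneg_right (by positivity)
  -- peel off the `k` largest entries; the rest is dominated entrywise by the smallest of them
  obtain ⟨T, hTg, hTk, hT⟩ :=
    exists_subset_card_eq_forall_le (fun i => |g i|) (supp g) (k := k) (by omega)
  obtain ⟨i₀, hi₀, hmin⟩ := T.exists_min_image (fun i => |g i|) (card_pos.mp (hTk ▸ hk))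
  have htail : ∀ i, |restr g Tᶜ i| ≤ |g i₀| := by
    intro i
    by_cases hi : i ∈ T
    · simp [restr, hi]
    by_cases hgi : g i = 0
    · simp [restr, hgi]
    simpa [restr, hi] using hT i₀ hi₀ i (mem_sdiff.mpr ⟨by simpa [supp] using hgi, hi⟩)
  have hk' : (0 : ℝ) < √k := Real.sqrt_pos.mpr (Nat.cast_pos.mpr hk)
  have hhead : (k : ℝ) * |g i₀| ≤ ∑ i ∈ T, |g i| := by
    simpa [hTk] using card_nsmul_le_sum T (fun i => |g i|) _ hmin
  have hM' : ∀ T' : Finset (Fin n), #T' ≤ k →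
      n2 (restr (restr g Tᶜ) T') ≤ (∑ i ∈ T, |g i|) / √k := by
    intro T' hT'
    refine (n2_restr_le_sqrt_card_mul (abs_nonneg _) fun i _ => htail i).trans ?_
    rw [le_div_iff₀ hk']
    calc √(#T' : ℝ) * |g i₀| * √k ≤ √k * |g i₀| * √k := by gcongr
      _ = k * |g i₀| := by rw [mul_right_comm, Real.mul_self_sqrt (Nat.cast_nonneg _)]
      _ ≤ ∑ i ∈ T, |g i| := hhead
  have hcard : #(supp (restr g Tᶜ)) < s := by
    rw [supp_restr_compl, card_sdiff_of_subset hTg, hs]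
    omega
  calc n2 (A *ᵥ g) = n2 (A *ᵥ restr g T + A *ᵥ restr g Tᶜ) := by
        rw [← mulVec_add, restr_add_restr_compl]
    _ ≤ n2 (A *ᵥ restr g T) + n2 (A *ᵥ restr g Tᶜ) := n2_add_le _ _
    _ ≤ √(1 + δ) * M + √(1 + δ) * ((∑ i ∈ T, |g i|) / √k + (∑ i, |restr g Tᶜ i|) / √k) := by
        gcongr
        · exact (hR.n2_mulVec_le (hTk ▸ card_le_card (supp_restr_subset g T))).trans
            (by gcongr; exact hM T hTk.le)
        · exact ih _ hcard hM' rfl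
    _ = √(1 + δ) * (M + (∑ i, |g i|) / √k) := by
        rw [sum_abs_restr, ← sum_add_sum_compl T]
        ring

lemma n2_mulVec_mul_le (hR : SatRIP A k δ) (hk : 0 < k) {ε V : Fin n → ℝ} {M : ℝ}
    (hε : ∀ T : Finset (Fin n), #T ≤ k → n2 (restr ε T) ≤ M)
    (hV : InCappedSimplex k V) :
    n2 (A *ᵥ (ε * V)) ≤ 2 * √(1 + δ) * M := by
  have hk' : (0 : ℝ) < √k := Real.sqrt_pos.mpr (Nat.cast_pos.mpr hk)
  have habs : ∀ i, |(ε * V) i| = |ε i| * V i := fun i => by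
    rw [Pi.mul_apply, abs_mul, abs_of_nonneg (hV.1 i).1]
  have hrestr : ∀ T : Finset (Fin n), #T ≤ k → n2 (restr (ε * V) T) ≤ M := by
    intro T hT
    refine le_trans (n2_le_n2_of_abs_le fun i => ?_) (hε T hT)
    rw [restr_mul, Pi.mul_apply, abs_mul, abs_of_nonneg (hV.1 i).1]
    exact mul_le_of_le_one_right (abs_nonneg _) (hV.1 i).2
  obtain ⟨T, hTk, hT⟩ := exists_card_le_sum_mul_le_sum hk (fun i => abs_nonneg (ε i)) hV
  have hl1 : ∑ i, |(ε * V) i| ≤ √k * M := by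
    simp only [habs]
    refine hT.trans ((sum_abs_le_sqrt_card_mul_n2_restr ε T).trans ?_)
    gcongr
    · exact n2_nonneg _
    · exact hε T hTk
  calc n2 (A *ᵥ (ε * V)) ≤ √(1 + δ) * (M + (∑ i, |(ε * V) i|) / √k) :=
        hR.n2_mulVec_le_of_forall_n2_restr_le hk hrestr
    _ ≤ √(1 + δ) * (M + √k * M / √k) := by gcongr
    _ = 2 * √(1 + δ) * M := by
        field_simp
        ring

end SatRIP

theorem stmt8_general
    {m n : ℕ} (A : Matrix (Fin m) (Fin n) ℝ)
    (x : Fin n → ℝ) (ν y : Fin m → ℝ) (hy : y = A.mulVec x + ν)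
    (k : ℕ) (hk : 0 < k)
    (S : Finset (Fin n)) (hS : IsTopK x k S)
    (ν' : Fin m → ℝ) (hν' : ν' = A.mulVec (restr x Sᶜ) + ν)
    (ω : ℕ)
    (δk δ3k : ℝ) (hδk : IsRIC A k δk) (hδ3k : IsRIC A (3 * k) δ3k)
    (wh : Fin n → ℝ) (hwh : InW k wh)
    (xp : Fin n → ℝ) (hxp : Sparse k xp)
    (up : Fin n → ℝ) (hup : up = xp + A.transpose.mulVec (y - A.mulVec xp))
    (w : ℕ → Fin n → ℝ) (hw : SCM A y k ω up w) :
    ∀ i : ℕ, 1 ≤ i → i ≤ ω - 1 →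
      n2 (A.mulVec ((up - restr x S) * (∏ l ∈ Finset.range i, w l)
            * ((1 : Fin n → ℝ) - wh)))
        ≤ 2 * δ3k * Real.sqrt (1 + δk) * n2 (restr x S - xp)
          + 2 * Real.sqrt (1 + δk) * n2 (A.transpose.mulVec ν') := by
  intro i hi hiω
  obtain ⟨⟨-, hRk⟩, -⟩ := hδk
  obtain ⟨⟨hδ3k, hR3k⟩, -⟩ := hδ3k
  have hε : up - restr x S = (Aᵀ *ᵥ (A *ᵥ (restr x S - xp)) - (restr x S - xp)) + Aᵀ *ᵥ ν' := by
    have hx : A *ᵥ x = A *ᵥ restr x S + A *ᵥ restr x Sᶜ := by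
      rw [← mulVec_add, restr_add_restr_compl]
    rw [hup, hy, hx, hν']
    simp only [mulVec_add, mulVec_sub]
    abel
  have hh : #(supp (restr x S - xp)) ≤ 2 * k :=
    (card_le_card ((supp_sub_subset _ _).trans (union_subset_union (supp_restr_subset _ _)
      subset_rfl))).trans ((card_union_le _ _).trans (by rw [hS.1, two_mul]; exact Nat.add_le_add_left hxp k))
  have hM : ∀ T : Finset (Fin n), #T ≤ k → n2 (restr (up - restr x S) T) ≤
      δ3k * n2 (restr x S - xp) + n2 (Aᵀ *ᵥ ν') := fun T hT => by
    rw [hε, restr_add]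
    exact (n2_add_le _ _).trans (add_le_add (hR3k.n2_restr_gram_sub_le hδ3k _ (by omega))
      (n2_restr_le _ _))
  have hV := (InCappedSimplex.prod_range hi fun l hl => (hw l (by omega)).1).mul
    hwh.one_sub_mem_Icc
  rw [mul_assoc]
  calc _ ≤ 2 * √(1 + δk) * (δ3k * n2 (restr x S - xp) + n2 (Aᵀ *ᵥ ν')) :=
        hRk.n2_mulVec_mul_le hk hM hV
    _ = _ := by ring

theorem stmt8
    {m n : ℕ} (A : Matrix (Fin m) (Fin n) ℝ)
    (x : Fin n → ℝ) (ν y : Fin m → ℝ) (hy : y = A.mulVec x + ν)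
    (k : ℕ) (hk : 0 < k)
    (S : Finset (Fin n)) (hS : IsTopK x k S)
    (ν' : Fin m → ℝ) (hν' : ν' = A.mulVec (restr x Sᶜ) + ν)
    (ω : ℕ) (hω : 1 ≤ ω)
    (δk δ3k : ℝ) (hδk : IsRIC A k δk) (hδ3k : IsRIC A (3 * k) δ3k)
    (wh : Fin n → ℝ) (hwh : InW k wh) (hsupp : supp (restr x S) ⊆ supp wh)
    (xp : Fin n → ℝ) (hxp : Sparse k xp)
    (up : Fin n → ℝ) (hup : up = xp + A.transpose.mulVec (y - A.mulVec xp))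
    (w : ℕ → Fin n → ℝ) (hw : SCM A y k ω up w) :
    ∀ i : ℕ, 1 ≤ i → i ≤ ω - 1 →
      n2 (A.mulVec ((up - restr x S) * (∏ l ∈ Finset.range i, w l)
            * ((1 : Fin n → ℝ) - wh)))
        ≤ 2 * δ3k * Real.sqrt (1 + δk) * n2 (restr x S - xp)
          + 2 * Real.sqrt (1 + δk) * n2 (A.transpose.mulVec ν') :=
  stmt8_general A x ν y hy k hk S hS ν' hν' ω δk δ3k hδk hδ3k wh hwh xp hxp up hup w hw
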